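/- arXiv:1904.08187 — 2 statements merged into one kernel-verified Lean document; each statement's English description precedes it below -/
import Mathlib

section
/- If s000t is a word of odd length n > 4 all of whose conjugates contain at most one occurrence of 000 as a factor, then for every i ≥ 0, the word s000t is bordered if and only if s0^{i+3}t is bordered. -/
open List

/-- `x` is a border of `w`: nonempty, proper, both a prefix and a suffix. -/
def IsBorder {α : Type*} (x w : List α) : Prop :=
  x ≠ [] ∧ x ≠ w ∧ x <+: w ∧ x <:+ w

/-- A word is bordered if it has a border. -/
def Bordered {α : Type*} (w : List α) : Prop := ∃ x, IsBorder x w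

/-- A word is unbordered if it has no border. -/
def Unbordered {α : Type*} (w : List α) : Prop := ¬ Bordered w

/-- `u` and `v` are conjugates. -/
def ConjWord {α : Type*} (u v : List α) : Prop := ∃ x y, u = x ++ y ∧ v = y ++ x

open Classical in
noncomputable def nuc {α : Type*} (w : List α) : ℕ :=
  ((Finset.range w.length).filter fun i => Unbordered (w.rotate i)).card

/-- `w` contains a square `xx` with `x` nonempty as a factor. -/
def HasSquare {α : Type*} (w : List α) : Prop := ∃ x : List α, x ≠ [] ∧ (x ++ x) <:+: w

/-- `w` is squarefree. -/
def SquarefreeWord {α : Type*} (w : List α) : Prop := ¬ HasSquare w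

/-- `w` is circularly squarefree: every conjugate is squarefree. -/
def CircSF {α : Type*} (w : List α) : Prop := ∀ u, ConjWord w u → SquarefreeWord u

/-- `w` is primitive: not a power `y^e` with `e ≥ 2`. -/
def Primitive {α : Type*} (w : List α) : Prop :=
  ¬ ∃ (y : List α) (e : ℕ), 2 ≤ e ∧ w = (List.replicate e y).flatten

/-- an occurrence of `000` starting at position `i` of `u`. -/
def OccursAt (u : List (Fin 2)) (i : ℕ) : Prop := (u.drop i).take 3 = [0, 0, 0]

/-!
If `000` occurs in `s000t` only at position `|s|`, then the occurrences of `000` in `s0^{m+3}t`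
are exactly the positions `|s|, …, |s| + m`. Comparing the occurrences of `000` in a border `x`,
read once as a prefix and once as a suffix, shows that `x` cannot reach past `s00` (unless the word
is `0^{m+3}`); by symmetry it cannot reach before `00t` either. So a border of `s0^{m+3}t` is a
prefix of `s00` and a suffix of `00t`, a condition that does not depend on `m`.
-/

section Border

variable {α : Type*} {x w : List α}

theorem IsBorder.reverse (h : IsBorder x w) : IsBorder x.reverse w.reverse := by
  obtain ⟨hne, hxw, hpre, hsuf⟩ := h
  exact ⟨by simpa using hne, by simpa using hxw, reverse_prefix.2 hsuf, reverse_suffix.2 hpre⟩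

theorem prefix_append_replicate_append (s t : List α) (c : α) (m : ℕ) :
    s ++ [c, c] <+: s ++ replicate (m + 3) c ++ t :=
  ⟨replicate (m + 1) c ++ t, by simp [replicate_succ]⟩

theorem suffix_append_replicate_append (s t : List α) (c : α) (m : ℕ) :
    [c, c] ++ t <:+ s ++ replicate (m + 3) c ++ t :=
  ⟨s ++ replicate (m + 1) c, by simp [replicate_add]⟩

theorem IsBorder.append_replicate_append {s t : List α} {c : α} {m : ℕ} (m' : ℕ)
    (h : IsBorder x (s ++ replicate (m + 3) c ++ t))
    (hs : x.length < s.length + 3) (ht : x.length < t.length + 3) :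
    IsBorder x (s ++ replicate (m' + 3) c ++ t) := by
  obtain ⟨hne, -, hpre, hsuf⟩ := h
  refine ⟨hne, fun hx => ?_, ?_, ?_⟩
  · have := congrArg length hx
    simp only [length_append, length_replicate] at this
    omega
  · exact (prefix_of_prefix_length_le hpre (prefix_append_replicate_append s t c m)
      (by simp; omega)).trans (prefix_append_replicate_append s t c m')
  · exact (suffix_of_suffix_length_le hsuf (suffix_append_replicate_append s t c m)
      (by simp; omega)).trans (suffix_append_replicate_append s t c m')

end Border

section Occurrences

variable {u v x : List (Fin 2)} {p : ℕ}

theorem OccursAt.add_three_le_length (h : OccursAt u p) : p + 3 ≤ u.length := by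
  have := congrArg length h
  simp only [length_take, length_drop, length_cons, length_nil] at this
  omega

theorem occursAt_iff_of_take_eq (h : u.take (p + 3) = v.take (p + 3)) :
    OccursAt u p ↔ OccursAt v p := by
  have window : ∀ l : List (Fin 2), (l.drop p).take 3 = (l.take (p + 3)).drop p := by
    intro l
    rw [drop_take, Nat.add_sub_cancel_left]
  simp only [OccursAt, window, h]

theorem occursAt_iff_of_prefix (h : x <+: u) (hp : p + 3 ≤ x.length) :
    OccursAt x p ↔ OccursAt u p :=
  occursAt_iff_of_take_eq (by rw [prefix_iff_eq_take.mp h, take_take, min_eq_left hp])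

theorem occursAt_append_left_iff (y : List (Fin 2)) :
    OccursAt (y ++ x) (y.length + p) ↔ OccursAt x p := by
  simp only [OccursAt, drop_length_add_append]

theorem occursAt_length_append (y z : List (Fin 2)) : OccursAt (y ++ [0, 0, 0] ++ z) y.length := by
  rw [append_assoc]
  exact (occursAt_append_left_iff (p := 0) y).2 rfl

theorem occursAt_reverse_iff (hp : p + 3 ≤ u.length) :
    OccursAt u.reverse p ↔ OccursAt u (u.length - 3 - p) := by
  have hdrop : u.reverse.drop p = (u.take (u.length - p)).reverse := by
    rw [reverse_take, Nat.sub_sub_self (by omega)]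
  simp only [OccursAt, hdrop, take_reverse, length_take, drop_take]
  rw [reverse_eq_iff, min_eq_left (by omega), Nat.sub_sub_self (by omega),
    show u.length - p - 3 = u.length - 3 - p by omega]
  rfl

end Occurrences

section Interval

variable {x w : List (Fin 2)} {a b : ℕ}

theorem IsBorder.length_lt_of_occursAt_iff (hx : IsBorder x w)
    (hocc : ∀ p, OccursAt w p ↔ a ≤ p ∧ p ≤ b) (hab : a ≤ b) (hw : 0 < a ∨ b + 3 < w.length) :
    x.length < a + 3 := by
  obtain ⟨-, hxw, hpre, y, rfl⟩ := hx
  by_contra! hlen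
  have hy : 0 < y.length := length_pos_of_ne_nil (by rintro rfl; exact hxw rfl)
  rw [length_append] at hw
  have pre : ∀ p, p + 3 ≤ x.length → (OccursAt x p ↔ a ≤ p ∧ p ≤ b) := fun p hp =>
    (occursAt_iff_of_prefix hpre hp).trans (hocc p)
  have suf : ∀ p, OccursAt x p ↔ a ≤ y.length + p ∧ y.length + p ≤ b := fun p =>
    (occursAt_append_left_iff y).symm.trans (hocc _)
  have hshift := (suf a).1 ((pre a hlen).2 ⟨le_rfl, hab⟩)
  -- Through the prefix `x` sees the run `[a, b]` unshifted, through the suffix shifted left by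
  -- `|y| > 0`: compare the left ends or, when the shifted run is cut off at `0`, the right ends.
  rcases le_or_gt y.length a with hya | hay
  · have := (pre (a - y.length) (by omega)).1 ((suf _).2 (by omega))
    omega
  · have ha : a = 0 := by
      have := (pre 0 (by omega)).1 ((suf 0).2 (by omega))
      omega
    have := (suf (b + 1 - y.length)).1 ((pre _ (by omega)).2 (by omega))
    omega

theorem IsBorder.length_add_lt_of_occursAt_iff (hx : IsBorder x w)
    (hocc : ∀ p, OccursAt w p ↔ a ≤ p ∧ p ≤ b) (hab : a ≤ b) (hw : 0 < a ∨ b + 3 < w.length) :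
    x.length + b < w.length := by
  have hbw := ((hocc b).2 ⟨hab, le_rfl⟩).add_three_le_length
  have hocc' : ∀ p, OccursAt w.reverse p ↔ w.length - 3 - b ≤ p ∧ p ≤ w.length - 3 - a := by
    intro p
    constructor
    · intro h
      have hp := h.add_three_le_length
      rw [length_reverse] at hp
      have := (hocc _).1 ((occursAt_reverse_iff hp).1 h)
      omega
    · intro hp
      exact (occursAt_reverse_iff (by omega)).2 ((hocc _).2 (by omega))
  have := hx.reverse.length_lt_of_occursAt_iff hocc' (by omega) (by rw [length_reverse]; omega)
  rw [length_reverse] at this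
  omega

end Interval

section Replicate

variable {s t x : List (Fin 2)}

theorem occursAt_append_replicate_append_iff_of_le (m : ℕ) {p : ℕ} (hp : p ≤ s.length) :
    OccursAt (s ++ replicate (m + 3) 0 ++ t) p ↔ OccursAt (s ++ [0, 0, 0] ++ t) p := by
  have hsplit : s ++ replicate (m + 3) 0 ++ t = s ++ [0, 0, 0] ++ (replicate m 0 ++ t) := by
    simp [replicate_succ]
  have hp3 : p + 3 ≤ (s ++ [0, 0, 0]).length := by simp [hp]
  refine occursAt_iff_of_take_eq ?_
  rw [hsplit, take_append_of_le_length hp3, take_append_of_le_length hp3]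

theorem occursAt_append_replicate_append_add_iff (m q : ℕ) :
    OccursAt (s ++ replicate (m + 3) 0 ++ t) (s.length + m + q) ↔
      OccursAt (s ++ [0, 0, 0] ++ t) (s.length + q) := by
  have hsplit : s ++ replicate (m + 3) 0 ++ t = (s ++ replicate m 0) ++ ([0, 0, 0] ++ t) := by
    simp [replicate_add]
  rw [hsplit, show s.length + m + q = (s ++ replicate m 0).length + q by simp,
    occursAt_append_left_iff, append_assoc s, occursAt_append_left_iff]

theorem occursAt_append_replicate_append {m q : ℕ} (hq : q ≤ m) :
    OccursAt (s ++ replicate (m + 3) 0 ++ t) (s.length + q) := by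
  have hsplit : s ++ replicate (m + 3) 0 ++ t =
      (s ++ replicate q 0) ++ [0, 0, 0] ++ (replicate (m - q) 0 ++ t) := by
    rw [show m + 3 = q + 3 + (m - q) by omega, replicate_add, replicate_add]
    simp
  rw [hsplit, show s.length + q = (s ++ replicate q 0).length by simp]
  exact occursAt_length_append _ _

theorem occursAt_append_replicate_append_iff
    (hF : ∀ p, OccursAt (s ++ [0, 0, 0] ++ t) p → p = s.length) (m p : ℕ) :
    OccursAt (s ++ replicate (m + 3) 0 ++ t) p ↔ s.length ≤ p ∧ p ≤ s.length + m := by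
  refine ⟨fun h => ?_, fun ⟨h₁, h₂⟩ => ?_⟩
  · rcases le_or_gt p s.length with hp | hp
    · have := hF p ((occursAt_append_replicate_append_iff_of_le m hp).1 h)
      omega
    · by_contra! hpm
      obtain ⟨q, rfl⟩ : ∃ q, p = s.length + m + q := ⟨p - (s.length + m), by omega⟩
      have := hF _ ((occursAt_append_replicate_append_add_iff m q).1 h)
      omega
  · obtain ⟨q, rfl⟩ : ∃ q, p = s.length + q := ⟨p - s.length, by omega⟩
    exact occursAt_append_replicate_append (by omega)

theorem IsBorder.length_lt_of_append_replicate_append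
    (hF : ∀ p, OccursAt (s ++ [0, 0, 0] ++ t) p → p = s.length) (hst : s ≠ [] ∨ t ≠ [])
    {m : ℕ} (hx : IsBorder x (s ++ replicate (m + 3) 0 ++ t)) :
    x.length < s.length + 3 ∧ x.length < t.length + 3 := by
  have hocc := occursAt_append_replicate_append_iff hF m
  have hw : 0 < s.length ∨ s.length + m + 3 < (s ++ replicate (m + 3) 0 ++ t).length := by
    simp only [length_append, length_replicate]
    rcases hst with hs | ht
    · exact .inl (length_pos_of_ne_nil hs)
    · exact .inr (by have := length_pos_of_ne_nil ht; omega)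
  have hpre := hx.length_lt_of_occursAt_iff hocc (by omega) hw
  have hsuf := hx.length_add_lt_of_occursAt_iff hocc (by omega) hw
  simp only [length_append, length_replicate] at hsuf
  omega

theorem Bordered.of_append_replicate_append
    (hF : ∀ p, OccursAt (s ++ [0, 0, 0] ++ t) p → p = s.length) (hst : s ≠ [] ∨ t ≠ [])
    {m : ℕ} (m' : ℕ) (h : Bordered (s ++ replicate (m + 3) 0 ++ t)) :
    Bordered (s ++ replicate (m' + 3) 0 ++ t) := by
  obtain ⟨x, hx⟩ := h
  obtain ⟨hs, ht⟩ := hx.length_lt_of_append_replicate_append hF hst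
  exact ⟨x, hx.append_replicate_append m' hs ht⟩

end Replicate

theorem stmt7_general (s t : List (Fin 2)) (n : ℕ)
    (hn : (s ++ [0, 0, 0] ++ t).length = n) (h4 : 4 < n)
    (honce : ∀ u, ConjWord (s ++ [0, 0, 0] ++ t) u →
      ∀ i j, OccursAt u i → OccursAt u j → i = j) :
    ∀ i : ℕ, (Bordered (s ++ [0, 0, 0] ++ t) ↔
      Bordered (s ++ List.replicate (i + 3) 0 ++ t)) := by
  intro i
  have hF : ∀ p, OccursAt (s ++ [0, 0, 0] ++ t) p → p = s.length := fun p hp =>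
    honce _ ⟨_, [], (append_nil _).symm, rfl⟩ p _ hp (occursAt_length_append s t)
  have hst : s ≠ [] ∨ t ≠ [] := by
    by_contra! h
    obtain ⟨rfl, rfl⟩ := h
    rw [← hn] at h4
    simp at h4
  exact ⟨Bordered.of_append_replicate_append hF hst (m := 0) i,
    Bordered.of_append_replicate_append hF hst 0⟩

theorem stmt7 (s t : List (Fin 2)) (n : ℕ)
    (hn : (s ++ [0, 0, 0] ++ t).length = n) (hodd : Odd n) (h4 : 4 < n)
    (honce : ∀ u, ConjWord (s ++ [0, 0, 0] ++ t) u →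
      ∀ i j, OccursAt u i → OccursAt u j → i = j) :
    ∀ i : ℕ, (Bordered (s ++ [0, 0, 0] ++ t) ↔
      Bordered (s ++ List.replicate (i + 3) 0 ++ t)) :=
  stmt7_general s t n hn h4 honce
end

section
/- If w' = s000t000 is a binary word of length n > 6 with s and t nonempty, then the four conjugates 00t000s0, 0t000s00, 00s000t0, and 0s000t00 of w' are all bordered, and consequently nuc(w') ≤ ⌊(n-6)/2⌋ + 2 < ⌊n/2⌋. -/
open List

/-!
An unbordered word of length at least two begins and ends with different letters, so a
conjugate beginning and ending with `0` is bordered; the four conjugates of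
`w' = s000t000` in question are its rotations by `|s| + 1`, `|s| + 2`, `|s| + |t| + 4` and
`|s| + |t| + 5`.

If two consecutive rotations `dv` and `vd` of a binary word are unbordered, then `d` does not
occur in `v`: otherwise, with `c ≠ d`, the shortest prefix `cᵖd` of `v` ending in `d` is a
border of `vd` when `p ≤ q`, and the shortest suffix `d c^q` of `v` beginning with `d` is a
border of `dv` when `q < p`. So `d` occurs exactly once in the word. In `w'` the letter `0`
occurs at least six times, hence either `1` occurs exactly once, and only the two rotations
beginning or ending with it can be unbordered, or no two consecutive rotations are unbordered.
In the latter case the unbordered rotations lie in the runs `[0, |s|]` and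
`[|s| + 3, |s| + |t| + 3]` of lengths `|s| + 1` and `|t| + 1`, with no two adjacent, so there
are at most `⌈(|s| + 1)/2⌉ + ⌈(|t| + 1)/2⌉` of them.
-/

section Words

variable {α : Type*}

theorem bordered_of_eq_append {w x y z : List α} (hx : x ≠ []) (hy : y ≠ [])
    (hpre : w = x ++ y) (hsuf : w = z ++ x) : Bordered w := by
  refine ⟨x, hx, ?_, hpre ▸ prefix_append x y, hsuf ▸ suffix_append z x⟩
  rintro rfl
  exact hy (by simpa using hpre)

theorem bordered_of_head?_eq_getLast? {u : List α} (hu : 2 ≤ u.length)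
    (h : u.head? = u.getLast?) : Bordered u := by
  obtain ⟨a, m, rfl⟩ := exists_cons_of_length_pos (by omega : 0 < u.length)
  obtain ⟨m', b, rfl⟩ := (eq_nil_or_concat' m).resolve_left (by rintro rfl; simp at hu)
  obtain rfl : a = b := by simpa [getLast?_cons] using h
  exact bordered_of_eq_append (x := [a]) (y := m' ++ [a]) (z := a :: m') (by simp) (by simp)
    rfl rfl

theorem Unbordered.head?_ne_getLast? {u : List α} (h : Unbordered u) (hu : 2 ≤ u.length) :
    u.head? ≠ u.getLast? :=
  fun he => h (bordered_of_head?_eq_getLast? hu he)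

theorem bordered_rotate_of_eq_append {w x y : List α} {i : ℕ} (h : w = x ++ y)
    (hi : x.length = i) (hb : Bordered (y ++ x)) : Bordered (w.rotate i) := by
  rwa [h, ← hi, rotate_append_length_eq]

theorem rotate_succ_eq_of_rotate_eq_cons {l v : List α} {j : ℕ} {d : α}
    (h : l.rotate j = d :: v) : l.rotate (j + 1) = v ++ [d] := by
  rw [← rotate_rotate, h, rotate_cons_succ, rotate_zero]

theorem getLast?_rotate {l : List α} {i : ℕ} (hi : i < l.length) :
    (l.rotate i).getLast? = l[(i + l.length - 1) % l.length]? := by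
  set k := (i + l.length - 1) % l.length
  have hk : k < l.length := Nat.mod_lt _ (by omega)
  obtain ⟨d, v, hdv⟩ := exists_cons_of_ne_nil
    (by rw [Ne, rotate_eq_nil_iff]; exact ne_nil_of_length_pos (by omega) : l.rotate k ≠ [])
  have hrot : l.rotate i = l.rotate (k + 1) := by
    rw [← rotate_mod l (k + 1), Nat.add_mod, Nat.mod_mod, ← Nat.add_mod,
      show i + l.length - 1 + 1 = i + l.length by omega, Nat.add_mod_right, rotate_mod]
  rw [hrot, rotate_succ_eq_of_rotate_eq_cons hdv, ← head?_rotate hk, hdv]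
  simp

theorem getElem?_ne_of_unbordered_rotate {w : List α} {i : ℕ} (hi : i < w.length)
    (hw : 2 ≤ w.length) (h : Unbordered (w.rotate i)) :
    w[i]? ≠ w[(i + w.length - 1) % w.length]? := by
  rw [← head?_rotate hi, ← getLast?_rotate hi]
  exact h.head?_ne_getLast? (by rwa [length_rotate])

theorem two_le_count_of_getElem?_eq [BEq α] [LawfulBEq α] {l : List α} {a : α} {i j : ℕ}
    (hij : i < j) (hi : l[i]? = some a) (hj : l[j]? = some a) : 2 ≤ l.count a := by
  have hpair : [a, a] <+ l := by
    rw [← take_append_drop j l]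
    refine (singleton_sublist.2 ?_).append (singleton_sublist.2 ?_)
    · exact mem_of_getElem? (by rwa [getElem?_take, if_pos hij])
    · exact mem_of_getElem? (by rwa [getElem?_drop, Nat.add_zero])
  simpa using hpair.count_le a

end Words

theorem fin_two_eq_of_ne_of_ne {a b c : Fin 2} (ha : a ≠ c) (hb : b ≠ c) : a = b := by
  revert a b c; decide

theorem fin_two_eq_one_or_eq_one_of_ne {a b : Fin 2} (h : a ≠ b) : a = 1 ∨ b = 1 := by
  revert a b; decide

theorem notMem_of_unbordered_cons_of_unbordered_append {d : Fin 2} {v : List (Fin 2)}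
    (h₁ : Unbordered (d :: v)) (h₂ : Unbordered (v ++ [d])) : d ∉ v := by
  intro hd
  obtain ⟨c, hc⟩ : ∃ c : Fin 2, c ≠ d := ⟨d + 1, (by decide : ∀ d : Fin 2, d + 1 ≠ d) d⟩
  have hrep : ∀ x : List (Fin 2), d ∉ x → ∃ p, x = replicate p c := fun x hx =>
    ⟨_, eq_replicate_iff.2
      ⟨rfl, fun b hb => fin_two_eq_of_ne_of_ne (ne_of_mem_of_not_mem hb hx) hc⟩⟩
  obtain ⟨x, z, rfl, hx⟩ := eq_append_cons_of_mem hd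
  obtain ⟨y, z', hrev, hy⟩ := eq_append_cons_of_mem (mem_reverse.2 hd)
  obtain ⟨p, rfl⟩ := hrep x hx
  obtain ⟨q, rfl⟩ := hrep y hy
  have hv : replicate p c ++ d :: z = z'.reverse ++ d :: replicate q c := by
    rw [← reverse_reverse (_ ++ _), hrev]
    simp
  rcases le_or_gt p q with hpq | hqp
  · obtain ⟨r, rfl⟩ := Nat.exists_eq_add_of_le hpq
    refine h₂ (bordered_of_eq_append (x := replicate p c ++ [d]) (y := z ++ [d])
      (z := z'.reverse ++ d :: replicate r c) (by simp) (by simp) (by simp) ?_)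
    simp only [hv, add_comm p r, replicate_add, append_assoc, cons_append]
  · obtain ⟨r, rfl⟩ := Nat.exists_eq_add_of_lt hqp
    refine h₁ (bordered_of_eq_append (x := d :: replicate q c) (y := replicate (r + 1) c ++ d :: z)
      (z := d :: z'.reverse) (by simp) (by simp)
      (by simp only [add_assoc, replicate_add, append_assoc, cons_append]) (by rw [hv]; simp))

theorem exists_count_eq_one_of_unbordered_rotate {w : List (Fin 2)} (hw : w ≠ []) {j : ℕ}
    (h : Unbordered (w.rotate j)) (h' : Unbordered (w.rotate (j + 1))) : ∃ d, w.count d = 1 := by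
  obtain ⟨d, v, hdv⟩ := exists_cons_of_ne_nil (by rwa [Ne, rotate_eq_nil_iff] : w.rotate j ≠ [])
  rw [hdv] at h
  rw [rotate_succ_eq_of_rotate_eq_cons hdv] at h'
  refine ⟨d, ?_⟩
  rw [← (rotate_perm w j).count_eq, hdv, count_cons_self,
    count_eq_zero.2 (notMem_of_unbordered_cons_of_unbordered_append h h')]

theorem nuc_le_two_of_count_eq_one {w : List (Fin 2)} (h : w.count 1 = 1) : nuc w ≤ 2 := by
  classical
  obtain ⟨k, hk⟩ := mem_iff_getElem?.1 (count_pos_iff.1 (by omega : 0 < w.count 1))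
  have huniq : ∀ i, w[i]? = some 1 → i = k := by
    intro i hi
    by_contra hne
    rcases lt_or_gt_of_ne hne with hlt | hlt
    · have := two_le_count_of_getElem?_eq hlt hi hk; omega
    · have := two_le_count_of_getElem?_eq hlt hk hi; omega
  have hkn : k < w.length := (List.getElem?_eq_some_iff.1 hk).1
  have hsub : (Finset.range w.length).filter (fun i => Unbordered (w.rotate i)) ⊆
      {k, (k + 1) % w.length} := by
    intro i hi
    obtain ⟨hin, hu⟩ := Finset.mem_filter.1 hi
    rw [Finset.mem_range] at hin
    rw [Finset.mem_insert, Finset.mem_singleton]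
    obtain hlen | hlen := lt_or_ge w.length 2
    · left; omega
    have hj : (i + w.length - 1) % w.length < w.length := Nat.mod_lt _ (by omega)
    have hne := getElem?_ne_of_unbordered_rotate hin hlen hu
    rw [getElem?_eq_getElem hin, getElem?_eq_getElem hj, Ne, Option.some_inj] at hne
    rcases fin_two_eq_one_or_eq_one_of_ne hne with h1 | h1
    · exact Or.inl (huniq i (by rw [getElem?_eq_getElem hin, h1]))
    · right
      rw [← huniq _ (by rw [getElem?_eq_getElem hj, h1]), Nat.mod_add_mod,
        show i + w.length - 1 + 1 = i + w.length by omega, Nat.add_mod_right, Nat.mod_eq_of_lt hin]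
  exact (Finset.card_le_card hsub).trans Finset.card_le_two

theorem card_le_of_subset_Ico_of_succ_notMem {S : Finset ℕ} {l m : ℕ}
    (hS : S ⊆ Finset.Ico l (l + m)) (h : ∀ j ∈ S, j + 1 ∉ S) : S.card ≤ (m + 1) / 2 := by
  -- each fibre of `j ↦ (j - l) / 2` consists of consecutive numbers, so meets `S` at most once
  calc S.card ≤ (Finset.range ((m + 1) / 2)).card := by
        refine Finset.card_le_card_of_injOn (fun j => (j - l) / 2) (fun j hj => ?_) ?_
        · have := Finset.mem_Ico.1 (hS hj)
          simp only [Finset.coe_range, Set.mem_Iio]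
          omega
        · intro i hi j hj hij
          have := Finset.mem_Ico.1 (hS hi)
          have := Finset.mem_Ico.1 (hS hj)
          by_contra hne
          rcases (by simp only at hij; omega : j = i + 1 ∨ i = j + 1) with rfl | rfl
          · exact h i hi hj
          · exact h j hj hi
    _ = (m + 1) / 2 := Finset.card_range _

theorem card_le_of_subset_range_union_Ico_of_succ_notMem {S : Finset ℕ} {a b : ℕ}
    (hS : S ⊆ Finset.range (a + 1) ∪ Finset.Ico (a + 3) (a + b + 4)) (h : ∀ j ∈ S, j + 1 ∉ S) :
    S.card ≤ (a + b) / 2 + 2 := by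
  have hsucc : ∀ p : ℕ → Prop, [DecidablePred p] → ∀ j ∈ S.filter p, j + 1 ∉ S.filter p :=
    fun p _ j hj hj1 => h j (Finset.mem_filter.1 hj).1 (Finset.mem_filter.1 hj1).1
  have hmem : ∀ j ∈ S, j < a + 1 ∨ a + 3 ≤ j ∧ j < a + b + 4 := fun j hj => by
    simpa using hS hj
  have hlow : (S.filter (· ≤ a)).card ≤ (a + 2) / 2 :=
    card_le_of_subset_Ico_of_succ_notMem (l := 0) (fun j hj => by
      obtain ⟨hjS, hja⟩ := Finset.mem_filter.1 hj
      simp only [Finset.mem_Ico]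
      omega) (hsucc _)
  have hhigh : (S.filter (¬ · ≤ a)).card ≤ (b + 2) / 2 :=
    card_le_of_subset_Ico_of_succ_notMem (l := a + 3) (fun j hj => by
      obtain ⟨hjS, hja⟩ := Finset.mem_filter.1 hj
      have := hmem j hjS
      simp only [Finset.mem_Ico]
      omega) (hsucc _)
  have := Finset.card_filter_add_card_filter_not (s := S) (p := (· ≤ a))
  omega

theorem nuc_le_of_bordered_rotate {w : List (Fin 2)} {a b : ℕ} (hlen : w.length = a + b + 6)
    (h0 : w.count 0 ≠ 1) (h1 : w.count 1 ≠ 1)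
    (hb : ∀ i ∈ ({a + 1, a + 2, a + b + 4, a + b + 5} : Finset ℕ), Bordered (w.rotate i)) :
    nuc w ≤ (a + b) / 2 + 2 := by
  classical
  refine card_le_of_subset_range_union_Ico_of_succ_notMem (fun j hj => ?_) (fun j hj hj1 => ?_)
  · obtain ⟨hjn, hj⟩ := Finset.mem_filter.1 hj
    have hjb : j ∉ ({a + 1, a + 2, a + b + 4, a + b + 5} : Finset ℕ) := fun hjb => hj (hb j hjb)
    simp only [Finset.mem_range, Finset.mem_union, Finset.mem_Ico, Finset.mem_insert,
      Finset.mem_singleton] at hjn hjb ⊢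
    omega
  · obtain ⟨d, hd⟩ := exists_count_eq_one_of_unbordered_rotate (ne_nil_of_length_pos (by omega))
      (Finset.mem_filter.1 hj).2 (Finset.mem_filter.1 hj1).2
    fin_cases d <;> contradiction

theorem stmt18_general (s t : List (Fin 2)) (n : ℕ)
    (w' : List (Fin 2)) (hw : w' = s ++ [0, 0, 0] ++ t ++ [0, 0, 0])
    (hn : w'.length = n) (h6 : 6 < n) :
    Bordered ([0, 0] ++ t ++ [0, 0, 0] ++ s ++ [0]) ∧
    Bordered ([0] ++ t ++ [0, 0, 0] ++ s ++ [0, 0]) ∧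
    Bordered ([0, 0] ++ s ++ [0, 0, 0] ++ t ++ [0]) ∧
    Bordered ([0] ++ s ++ [0, 0, 0] ++ t ++ [0, 0]) ∧
    nuc w' ≤ (n - 6) / 2 + 2 ∧ (n - 6) / 2 + 2 < n / 2 := by
  have hlen : w'.length = s.length + t.length + 6 := by subst hw; simp; omega
  have h₁ : Bordered ([0, 0] ++ t ++ [0, 0, 0] ++ s ++ [0]) :=
    bordered_of_head?_eq_getLast? (by simp) (by simp [getLast?_cons])
  have h₂ : Bordered ([0] ++ t ++ [0, 0, 0] ++ s ++ [0, 0]) :=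
    bordered_of_head?_eq_getLast? (by simp; omega) (by simp [getLast?_cons])
  have h₃ : Bordered ([0, 0] ++ s ++ [0, 0, 0] ++ t ++ [0]) :=
    bordered_of_head?_eq_getLast? (by simp) (by simp [getLast?_cons])
  have h₄ : Bordered ([0] ++ s ++ [0, 0, 0] ++ t ++ [0, 0]) :=
    bordered_of_head?_eq_getLast? (by simp; omega) (by simp [getLast?_cons])
  refine ⟨h₁, h₂, h₃, h₄, ?_, by omega⟩
  by_cases h1 : w'.count 1 = 1
  · exact (nuc_le_two_of_count_eq_one h1).trans (by omega)
  have h0 : w'.count 0 ≠ 1 := by subst hw; simp; omega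
  refine (nuc_le_of_bordered_rotate hlen h0 h1 ?_).trans (by omega)
  simp only [Finset.mem_insert, Finset.mem_singleton, forall_eq_or_imp, forall_eq]
  refine ⟨?_, ?_, ?_, ?_⟩
  · exact bordered_rotate_of_eq_append (x := s ++ [0]) (y := [0, 0] ++ t ++ [0, 0, 0])
      (by simp [hw]) (by simp) (by simpa using h₁)
  · exact bordered_rotate_of_eq_append (x := s ++ [0, 0]) (y := [0] ++ t ++ [0, 0, 0])
      (by simp [hw]) (by simp) (by simpa using h₂)
  · exact bordered_rotate_of_eq_append (x := s ++ [0, 0, 0] ++ t ++ [0]) (y := [0, 0])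
      (by simp [hw]) (by simp; omega) (by simpa using h₃)
  · exact bordered_rotate_of_eq_append (x := s ++ [0, 0, 0] ++ t ++ [0, 0]) (y := [0])
      (by simp [hw]) (by simp; omega) (by simpa using h₄)

theorem stmt18 (s t : List (Fin 2)) (hs : s ≠ []) (ht : t ≠ []) (n : ℕ)
    (w' : List (Fin 2)) (hw : w' = s ++ [0, 0, 0] ++ t ++ [0, 0, 0])
    (hn : w'.length = n) (h6 : 6 < n) :
    Bordered ([0, 0] ++ t ++ [0, 0, 0] ++ s ++ [0]) ∧
    Bordered ([0] ++ t ++ [0, 0, 0] ++ s ++ [0, 0]) ∧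
    Bordered ([0, 0] ++ s ++ [0, 0, 0] ++ t ++ [0]) ∧
    Bordered ([0] ++ s ++ [0, 0, 0] ++ t ++ [0, 0]) ∧
    nuc w' ≤ (n - 6) / 2 + 2 ∧ (n - 6) / 2 + 2 < n / 2 :=
  stmt18_general s t n w' hw hn h6
end
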